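/- The generating functions A(x) = Σ a(n)x^n and B(x) = Σ b(n)x^n of even and odd Motzkin path counts satisfy A(x) = 1 + x·A(x) + 2x²·A(x)·B(x) and B(x) = x·B(x) + x²·A(x)² + x²·B(x)². -/

import Mathlib

inductive MStep where
  | U : MStep
  | D : MStep
  | H : MStep
deriving DecidableEq

/-- A word in {U,D,H} is a Motzkin path if #U = #D and no prefix has more D's than U's. -/
def IsMotzkin (w : List MStep) : Prop :=
  w.count MStep.U = w.count MStep.D ∧
  ∀ p : List MStep, p <+: w → p.count MStep.D ≤ p.count MStep.U

/-- Number of Motzkin paths of length n (the n-th Motzkin number). -/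
noncomputable def motzkinNum (n : ℕ) : ℕ :=
  Nat.card {w : List MStep // w.length = n ∧ IsMotzkin w}

/-- Number of Motzkin paths of length n with an even number of U steps. -/
noncomputable def evenMotzkin (n : ℕ) : ℕ :=
  Nat.card {w : List MStep // w.length = n ∧ IsMotzkin w ∧ Even (w.count MStep.U)}

/-- Number of Motzkin paths of length n with an odd number of U steps. -/
noncomputable def oddMotzkin (n : ℕ) : ℕ :=
  Nat.card {w : List MStep // w.length = n ∧ IsMotzkin w ∧ Odd (w.count MStep.U)}

/-- The shadow of the n-th Motzkin number: s(n) = a(n) - b(n). -/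
noncomputable def shadow (n : ℕ) : ℤ :=
  (evenMotzkin n : ℤ) - (oddMotzkin n : ℤ)

/-!
Weight a Motzkin path by `ε ^ #U`. Splitting a nonempty path at its first step, either `H w` or
`U w₁ D w₂` with `D` the first return to height zero, shows that the weighted series
`M_ε = Σ_w ε^{#U w} x^{|w|}` satisfies `M_ε = 1 + x M_ε + ε x² M_ε²`. When `ε² = 1` the weight only
sees the parity of `#U`, so `M_ε = A + ε B`. Adding and subtracting the equations for `ε = 1` and
`ε = -1` gives `2A` and `2B`, and `2` cancels in `ℤ⟦x⟧`.
-/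

open MStep
open Finset hiding mk

namespace IsMotzkin

theorem nil : IsMotzkin [] :=
  ⟨rfl, fun p hp => by simp [List.prefix_nil.mp hp]⟩

theorem append {w₁ w₂ : List MStep} (h₁ : IsMotzkin w₁) (h₂ : IsMotzkin w₂) :
    IsMotzkin (w₁ ++ w₂) := by
  refine ⟨by simp [List.count_append, h₁.1, h₂.1], fun p hp => ?_⟩
  rcases List.prefix_or_prefix_of_prefix hp (List.prefix_append w₁ w₂) with hp₁ | ⟨r, rfl⟩
  · exact h₁.2 p hp₁
  · have := h₂.2 r ((List.prefix_append_right_inj w₁).mp hp)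
    simp only [List.count_append, h₁.1]
    omega

theorem U_cons_append_D {w : List MStep} (h : IsMotzkin w) : IsMotzkin (U :: (w ++ [D])) := by
  refine ⟨by simp [h.1], fun p hp => ?_⟩
  rcases List.prefix_cons_iff.mp hp with rfl | ⟨q, rfl, hq⟩
  · simp
  rcases List.prefix_concat_iff.mp hq with rfl | hq
  · simp [h.1]
  · have := h.2 q hq
    simp only [List.count_cons_self, List.count_cons_of_ne, ne_eq, reduceCtorEq,
      not_false_eq_true]
    omega

theorem H_cons_iff {t : List MStep} : IsMotzkin (H :: t) ↔ IsMotzkin t := by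
  refine ⟨fun h => ⟨by simpa [List.count_cons] using h.1, fun p hp => ?_⟩,
    fun h => (show IsMotzkin [H] from ⟨rfl, ?_⟩).append h⟩
  · simpa [List.count_cons] using h.2 (H :: p) (List.cons_prefix_cons.mpr ⟨rfl, hp⟩)
  · intro p hp
    rcases List.prefix_cons_iff.mp hp with rfl | ⟨q, rfl, hq⟩ <;> simp_all

theorem not_D_cons (t : List MStep) : ¬ IsMotzkin (D :: t) := fun h => by
  simpa using h.2 [D] (List.cons_prefix_cons.mpr ⟨rfl, List.nil_prefix⟩)

theorem not_append_D_cons {w r : List MStep} (h : IsMotzkin w) : ¬ IsMotzkin (w ++ D :: r) :=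
  fun h' => by
    have := h'.2 (w ++ [D]) (by simp)
    simp [List.count_append, h.1] at this

end IsMotzkin

/-- `w₁` is the part of `t` before the first step at which the path sinks `k + 1` below its
starting height. -/
theorem exists_first_passage (t : List MStep) (k : ℕ) (h : t.count U + k < t.count D) :
    ∃ w₁ w₂, t = w₁ ++ D :: w₂ ∧ w₁.count D = w₁.count U + k ∧
      ∀ p, p <+: w₁ → p.count D ≤ p.count U + k := by
  induction t generalizing k with
  | nil => simp at h
  | cons a t ih =>
    by_cases hstop : a = D ∧ k = 0
    · obtain ⟨rfl, rfl⟩ := hstop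
      exact ⟨[], t, rfl, rfl, fun p hp => by simp [List.prefix_nil.mp hp]⟩
    obtain ⟨k', hk'⟩ : ∃ k', (if a == D then 1 else 0) + k' = (if a == U then 1 else 0) + k := by
      cases a
      · exact ⟨k + 1, by simp [add_comm]⟩
      · exact ⟨k - 1, by simp at hstop ⊢; omega⟩
      · exact ⟨k, by simp⟩
    simp only [List.count_cons] at h
    obtain ⟨w₁, w₂, rfl, hc, hp⟩ := ih k' (by omega)
    refine ⟨a :: w₁, w₂, rfl, by simp only [List.count_cons]; omega, fun p hp' => ?_⟩
    rcases List.prefix_cons_iff.mp hp' with rfl | ⟨q, rfl, hq⟩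
    · simp
    · have := hp q hq
      simp only [List.count_cons]
      omega

theorem IsMotzkin.eq_of_append_D_cons_eq {w₁ w₂ w₁' w₂' : List MStep} (h₁ : IsMotzkin w₁)
    (h₁' : IsMotzkin w₁') (h : w₁ ++ D :: w₂ = w₁' ++ D :: w₂') : w₁ = w₁' ∧ w₂ = w₂' := by
  rcases List.append_eq_append_iff.mp h with ⟨r, rfl, hr⟩ | ⟨r, rfl, hr⟩
  · cases r with
    | nil => simpa using hr
    | cons x r =>
      obtain ⟨rfl, -⟩ := List.cons_eq_cons.mp hr
      exact absurd h₁' h₁.not_append_D_cons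
  · cases r with
    | nil => simpa using hr.symm
    | cons x r =>
      obtain ⟨rfl, -⟩ := List.cons_eq_cons.mp hr
      exact absurd h₁ h₁'.not_append_D_cons

theorem IsMotzkin.U_cons_iff {t : List MStep} :
    IsMotzkin (U :: t) ↔ ∃ w₁ w₂, t = w₁ ++ D :: w₂ ∧ IsMotzkin w₁ ∧ IsMotzkin w₂ := by
  constructor
  · rintro ⟨hc, hp⟩
    obtain ⟨w₁, w₂, rfl, hc₁, hp₁⟩ := exists_first_passage t 0 (by simpa using hc.le)
    refine ⟨w₁, w₂, rfl, ⟨hc₁.symm, hp₁⟩, ?_, fun p hp₂ => ?_⟩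
    · simp only [List.count_cons_self, List.count_cons_of_ne, List.count_append, ne_eq,
        reduceCtorEq, not_false_eq_true] at hc
      omega
    · have := hp (U :: (w₁ ++ D :: p)) (by simpa using hp₂)
      simp only [List.count_cons_self, List.count_cons_of_ne, List.count_append, ne_eq,
        reduceCtorEq, not_false_eq_true] at this
      omega
  · rintro ⟨w₁, w₂, rfl, h₁, h₂⟩
    simpa using h₁.U_cons_append_D.append h₂

instance : Fintype MStep := ⟨{U, D, H}, fun x => by cases x <;> simp⟩

theorem finite_setOf_isMotzkin (n : ℕ) :
    {w : List MStep | w.length = n ∧ IsMotzkin w}.Finite :=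
  (List.finite_length_eq MStep n).subset fun _ hw => hw.1

noncomputable def motzkinPaths (n : ℕ) : Finset (List MStep) :=
  (finite_setOf_isMotzkin n).toFinset

@[simp]
theorem mem_motzkinPaths {n : ℕ} {w : List MStep} :
    w ∈ motzkinPaths n ↔ w.length = n ∧ IsMotzkin w := by
  simp [motzkinPaths]

theorem motzkinPaths_zero : motzkinPaths 0 = {[]} := by
  ext w
  simpa using fun hw : w = [] => hw ▸ IsMotzkin.nil

theorem motzkinPaths_one : motzkinPaths 1 = {[H]} := by
  ext w
  simp only [mem_motzkinPaths, List.length_eq_one_iff, Finset.mem_singleton]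
  constructor
  · rintro ⟨⟨a, rfl⟩, h⟩
    cases a with
    | U => simpa using h.1
    | D => exact absurd h (IsMotzkin.not_D_cons [])
    | H => rfl
  · rintro rfl
    exact ⟨⟨H, rfl⟩, IsMotzkin.H_cons_iff.mpr IsMotzkin.nil⟩

/-- The index `ij` records the lengths of the two paths, so that sums split along
`antidiagonal n`. -/
noncomputable def motzkinPairs (n : ℕ) : Finset ((_ : ℕ × ℕ) × List MStep × List MStep) :=
  (antidiagonal n).sigma fun ij => motzkinPaths ij.1 ×ˢ motzkinPaths ij.2

theorem motzkinPaths_add_two (n : ℕ) :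
    motzkinPaths (n + 2) = (motzkinPaths (n + 1)).image (H :: ·) ∪
      (motzkinPairs n).image fun x => U :: (x.2.1 ++ D :: x.2.2) := by
  ext w
  simp only [mem_union, mem_image, mem_motzkinPaths, motzkinPairs, mem_sigma, mem_product,
    HasAntidiagonal.mem_antidiagonal, Sigma.exists, Prod.exists]
  constructor
  · rintro ⟨hlen, hw⟩
    match w, hw with
    | [], _ => simp at hlen
    | H :: t, hw => exact Or.inl ⟨t, ⟨by simpa using hlen, IsMotzkin.H_cons_iff.mp hw⟩, rfl⟩
    | D :: t, hw => exact absurd hw (IsMotzkin.not_D_cons t)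
    | U :: t, hw =>
      obtain ⟨w₁, w₂, rfl, h₁, h₂⟩ := IsMotzkin.U_cons_iff.mp hw
      refine Or.inr ⟨_, _, w₁, w₂, ⟨?_, ⟨rfl, h₁⟩, rfl, h₂⟩, rfl⟩
      simp only [List.length_cons, List.length_append, Nat.add_right_cancel_iff] at hlen
      omega
  · rintro (⟨t, ⟨ht, h⟩, rfl⟩ | ⟨i, j, w₁, w₂, ⟨hij, ⟨rfl, h₁⟩, rfl, h₂⟩, rfl⟩)
    · exact ⟨by simp [ht], IsMotzkin.H_cons_iff.mpr h⟩
    · exact ⟨by simp [← hij, add_assoc], IsMotzkin.U_cons_iff.mpr ⟨w₁, w₂, rfl, h₁, h₂⟩⟩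

theorem sum_motzkinPaths_add_two {M : Type*} [AddCommMonoid M] (f : List MStep → M) (n : ℕ) :
    ∑ w ∈ motzkinPaths (n + 2), f w =
      ∑ w ∈ motzkinPaths (n + 1), f (H :: w) +
        ∑ ij ∈ antidiagonal n, ∑ w₁ ∈ motzkinPaths ij.1, ∑ w₂ ∈ motzkinPaths ij.2,
          f (U :: (w₁ ++ D :: w₂)) := by
  have hinj : Set.InjOn (fun x : (_ : ℕ × ℕ) × List MStep × List MStep =>
      U :: (x.2.1 ++ D :: x.2.2)) (motzkinPairs n) := by
    rintro ⟨⟨i, j⟩, w₁, w₂⟩ hw ⟨⟨i', j'⟩, w₁', w₂'⟩ hw' heq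
    simp only [motzkinPairs, coe_sigma, Set.mem_sigma_iff, mem_coe,
      HasAntidiagonal.mem_antidiagonal, mem_product, mem_motzkinPaths, List.cons.injEq, true_and] at hw hw' heq
    obtain ⟨-, ⟨rfl, h₁⟩, rfl, -⟩ := hw
    obtain ⟨-, ⟨rfl, h₁'⟩, rfl, -⟩ := hw'
    obtain ⟨rfl, rfl⟩ := h₁.eq_of_append_D_cons_eq h₁' heq
    rfl
  have hdisj : Disjoint ((motzkinPaths (n + 1)).image (H :: ·))
      ((motzkinPairs n).image fun x => U :: (x.2.1 ++ D :: x.2.2)) := by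
    simp only [disjoint_left, mem_image]
    rintro _ ⟨_, _, rfl⟩ ⟨_, _, h⟩
    cases h
  rw [motzkinPaths_add_two, sum_union hdisj,
    sum_image fun _ _ _ _ h => List.cons_injective h, sum_image hinj, motzkinPairs, sum_sigma]
  simp [sum_product]

section Signed

open PowerSeries

variable {R : Type*} [CommSemiring R]

theorem PowerSeries.mk_eq_of_motzkin_recurrence (ε : R) (c : ℕ → R) (h₀ : c 0 = 1)
    (h₁ : c 1 = 1)
    (h : ∀ n, c (n + 2) = c (n + 1) + ε * ∑ ij ∈ antidiagonal n, c ij.1 * c ij.2) :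
    mk c = 1 + X * mk c + C ε * X ^ 2 * mk c ^ 2 := by
  ext n
  rw [show C ε * X ^ 2 * mk c ^ 2 = X ^ 2 * (C ε * (mk c * mk c)) by ring]
  rcases n with _ | _ | n
  · simp [h₀]
  · simp [h₁, h₀, coeff_X_pow_mul']
  · rw [map_add, map_add, coeff_succ_X_mul, coeff_X_pow_mul', coeff_C_mul, coeff_mul]
    simp [h]

noncomputable def signedMotzkin (ε : R) (n : ℕ) : R :=
  ∑ w ∈ motzkinPaths n, ε ^ w.count U

theorem signedMotzkin_add_two (ε : R) (n : ℕ) :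
    signedMotzkin ε (n + 2) = signedMotzkin ε (n + 1) +
      ε * ∑ ij ∈ antidiagonal n, signedMotzkin ε ij.1 * signedMotzkin ε ij.2 := by
  unfold signedMotzkin
  rw [sum_motzkinPaths_add_two, mul_sum]
  congr 1
  refine sum_congr rfl fun ij _ => ?_
  rw [sum_mul_sum, mul_sum]
  refine sum_congr rfl fun w₁ _ => ?_
  rw [mul_sum]
  refine sum_congr rfl fun w₂ _ => ?_
  simp only [List.count_cons, List.count_append, beq_iff_eq, reduceCtorEq, ↓reduceIte, BEq.rfl,
    add_zero, pow_add, pow_one]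
  ring

theorem mk_signedMotzkin (ε : R) :
    mk (signedMotzkin ε) =
      1 + X * mk (signedMotzkin ε) + C ε * X ^ 2 * mk (signedMotzkin ε) ^ 2 :=
  mk_eq_of_motzkin_recurrence ε _ (by simp [signedMotzkin, motzkinPaths_zero])
    (by simp [signedMotzkin, motzkinPaths_one]) (signedMotzkin_add_two ε)

theorem card_filter_motzkinPaths (P : List MStep → Prop) [DecidablePred P] (n : ℕ) :
    ((motzkinPaths n).filter P).card =
      Nat.card {w : List MStep // w.length = n ∧ IsMotzkin w ∧ P w} := by
  rw [← Nat.card_eq_finsetCard]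
  exact Nat.card_congr (Equiv.subtypeEquivRight fun w => by simp [and_assoc])

theorem signedMotzkin_eq {ε : R} (hε : ε ^ 2 = 1) (n : ℕ) :
    signedMotzkin ε n = evenMotzkin n + ε * oddMotzkin n := by
  have heven (k : ℕ) (hk : Even k) : ε ^ k = 1 := by
    obtain ⟨m, rfl⟩ := hk
    rw [← two_mul, pow_mul, hε, one_pow]
  have hodd (k : ℕ) (hk : Odd k) : ε ^ k = ε := by
    obtain ⟨m, rfl⟩ := hk
    rw [pow_succ, pow_mul, hε, one_pow, one_mul]
  rw [signedMotzkin, ← sum_filter_add_sum_filter_not _ fun w => Even (w.count U),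
    sum_congr rfl fun w hw => heven _ (mem_filter.mp hw).2,
    sum_congr rfl fun w hw => hodd _ (Nat.not_even_iff_odd.mp (mem_filter.mp hw).2),
    sum_const, sum_const, nsmul_one, nsmul_eq_mul, mul_comm, card_filter_motzkinPaths,
    card_filter_motzkinPaths]
  simp only [Nat.not_even_iff_odd]
  rfl

theorem mk_signedMotzkin_eq {ε : R} (hε : ε ^ 2 = 1) :
    mk (signedMotzkin ε) =
      mk (fun n => (evenMotzkin n : R)) + C ε * mk (fun n => (oddMotzkin n : R)) := by
  ext n
  simp [signedMotzkin_eq hε]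

end Signed

open PowerSeries in
theorem stmt_14 :
    (PowerSeries.mk fun n => (evenMotzkin n : ℤ)) =
      1 + X * (PowerSeries.mk fun n => (evenMotzkin n : ℤ))
        + 2 * X ^ 2 * (PowerSeries.mk fun n => (evenMotzkin n : ℤ))
            * (PowerSeries.mk fun n => (oddMotzkin n : ℤ)) ∧
    (PowerSeries.mk fun n => (oddMotzkin n : ℤ)) =
      X * (PowerSeries.mk fun n => (oddMotzkin n : ℤ))
        + X ^ 2 * (PowerSeries.mk fun n => (evenMotzkin n : ℤ)) ^ 2
        + X ^ 2 * (PowerSeries.mk fun n => (oddMotzkin n : ℤ)) ^ 2 := by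
  have hM := mk_signedMotzkin (1 : ℤ)
  have hS := mk_signedMotzkin (-1 : ℤ)
  rw [mk_signedMotzkin_eq (by norm_num)] at hM hS
  simp only [map_one, map_neg, one_mul, neg_mul] at hM hS
  have h2 : (2 : ℤ⟦X⟧) ≠ 0 := fun h =>
    two_ne_zero (by simpa [map_ofNat] using congrArg constantCoeff h : (2 : ℤ) = 0)
  exact ⟨mul_left_cancel₀ h2 (by linear_combination hM + hS),
    mul_left_cancel₀ h2 (by linear_combination hM - hS)⟩
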